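/- For every u ∈ (0,1), the following integral identity holds: (1/2)·∫₀¹ u^{-p-2}·(1-u)^{p-2}·(sin(πp)/π)·(1-p) dp = g₁(u), where g₁(u) := (1/(2u²(1-u)²)) · (π² + (log((1-u)/u))² + (2/u)·log((1-u)/u)) / (π² + (log((1-u)/u))²)². -/

import Mathlib

/-!
With `L = log ((1 - u) / u)` the powers combine to `u^(-p-2) (1-u)^(p-2) = e^{L p} / (u² (1-u)²)`,
so the integral is a constant multiple of `∫₀¹ e^{L p} (1 - p) sin (π p) dp`. That integrand has an
elementary antiderivative (exponential times a trigonometric polynomial, with denominator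
`(L² + π²)²`), and evaluating it at `0` and `1` and using `e^L = (1 - u) / u` yields `g₁(u)`.
-/

open Real

/-- The correction term `g₁` of the refined SFS approximation. -/
noncomputable def g1 (u : ℝ) : ℝ :=
  (1 / (2 * u ^ 2 * (1 - u) ^ 2)) *
    (π ^ 2 + (Real.log ((1 - u) / u)) ^ 2 + (2 / u) * Real.log ((1 - u) / u)) /
    (π ^ 2 + (Real.log ((1 - u) / u)) ^ 2) ^ 2

lemma hasDerivAt_antideriv_exp_mul_one_sub_mul_sin {a ω : ℝ} (h : a ^ 2 + ω ^ 2 ≠ 0) (p : ℝ) :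
    HasDerivAt
      (fun q => exp (a * q) / (a ^ 2 + ω ^ 2) ^ 2 *
        (((1 - q) * (a ^ 2 + ω ^ 2) + a) * (a * sin (ω * q) - ω * cos (ω * q))
          - ω * (a * cos (ω * q) + ω * sin (ω * q))))
      (exp (a * p) * (1 - p) * sin (ω * p)) p := by
  have he : HasDerivAt (fun q => exp (a * q)) (exp (a * p) * a) p := by
    simpa using ((hasDerivAt_id p).const_mul a).exp
  have hs : HasDerivAt (fun q => sin (ω * q)) (cos (ω * p) * ω) p := by
    simpa using ((hasDerivAt_id p).const_mul ω).sin
  have hc : HasDerivAt (fun q => cos (ω * q)) (-sin (ω * p) * ω) p := by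
    simpa using ((hasDerivAt_id p).const_mul ω).cos
  have hpoly := (((hasDerivAt_id p).const_sub 1).mul_const (a ^ 2 + ω ^ 2)).add_const a
  refine ((he.div_const ((a ^ 2 + ω ^ 2) ^ 2)).mul
    ((hpoly.mul ((hs.const_mul a).sub (hc.const_mul ω))).sub
      (((hc.const_mul a).add (hs.const_mul ω)).const_mul ω))).congr_deriv ?_
  simp only [Pi.sub_apply, Pi.mul_apply, Pi.add_apply, id]
  field_simp
  ring

lemma integral_exp_mul_one_sub_mul_sin_pi (a : ℝ) :
    ∫ p in (0 : ℝ)..1, exp (a * p) * (1 - p) * sin (π * p)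
      = π * (a ^ 2 + π ^ 2 + 2 * a * (exp a + 1)) / (a ^ 2 + π ^ 2) ^ 2 := by
  have hD : a ^ 2 + π ^ 2 ≠ 0 := by positivity
  rw [intervalIntegral.integral_eq_sub_of_hasDerivAt
    (fun p _ => hasDerivAt_antideriv_exp_mul_one_sub_mul_sin hD p)
    ((by fun_prop : Continuous _).intervalIntegrable _ _)]
  simp only [mul_one, mul_zero, sin_pi, cos_pi, sin_zero, cos_zero, exp_zero, sub_self]
  field_simp
  ring

lemma rpow_neg_sub_two_mul_rpow_sub_two {a b : ℝ} (ha : 0 < a) (hb : 0 < b) (p : ℝ) :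
    a ^ (-p - 2) * b ^ (p - 2) = exp (log (b / a) * p) / (a ^ 2 * b ^ 2) := by
  rw [rpow_sub ha, rpow_sub hb, rpow_neg ha.le, ← rpow_def_of_pos (div_pos hb ha),
    div_rpow hb.le ha.le]
  norm_cast
  field_simp

theorem stmt14 (u : ℝ) (hu : u ∈ Set.Ioo (0 : ℝ) 1) :
    (1 / 2) * ∫ p in (0:ℝ)..1,
        u ^ (-p - 2) * (1 - u) ^ (p - 2) * (Real.sin (π * p) / π) * (1 - p) = g1 u := by
  obtain ⟨hu0, hu1⟩ := hu
  have hv : 0 < 1 - u := by linarith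
  have hintegrand : ∀ p : ℝ, u ^ (-p - 2) * (1 - u) ^ (p - 2) * (sin (π * p) / π) * (1 - p)
      = 1 / (u ^ 2 * (1 - u) ^ 2 * π) *
        (exp (log ((1 - u) / u) * p) * (1 - p) * sin (π * p)) := by
    intro p
    rw [rpow_neg_sub_two_mul_rpow_sub_two hu0 hv]
    field_simp
  rw [intervalIntegral.integral_congr (fun p _ => hintegrand p),
    intervalIntegral.integral_const_mul, integral_exp_mul_one_sub_mul_sin_pi,
    exp_log (div_pos hv hu0), g1]
  have hD : log ((1 - u) / u) ^ 2 + π ^ 2 ≠ 0 := by positivity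
  field_simp
  ring
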